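/- arXiv:1609.05363 — 3 statements merged into one kernel-verified Lean document; each statement's English description precedes it below -/
import Mathlib

section
/- For every n ≥ 1, the sum of the von Mangoldt function Λ(f) over all monic polynomials f of degree n in 𝔽_q[x] equals q^n. -/
open Polynomial
open scoped Classical

/-- The von Mangoldt function on `𝔽_q[x]`: `Λ(f) = deg P` if `f = c·P^j` with
`c ∈ 𝔽_q^×`, `P` monic irreducible and `j ≥ 1`, and `Λ(f) = 0` otherwise. -/
noncomputable def polyVonMangoldt (F : Type) [Field F] [Fintype F] (f : F[X]) : ℕ :=
  if h : ∃ P : F[X], P.Monic ∧ Irreducible P ∧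
      ∃ j : ℕ, 1 ≤ j ∧ ∃ c : F, c ≠ 0 ∧ f = C c * P ^ j
  then h.choose.natDegree else 0

/-! Unique factorization gives `∑_{g ∣ f monic} Λ(g) = deg f` for every monic `f`. Summing this
over the `q^n` monic `f` of degree `n`, and using that a monic `g` of degree `m ≤ n` divides exactly
`q^(n-m)` of them, yields `∑_{m ≤ n} S_m q^(n-m) = n q^n` for `S_m = ∑_{deg f = m} Λ(f)`.
Subtracting `q` times the same identity for `n - 1` leaves `S_n = q^n`. -/

namespace Polynomial

open Finset UniqueFactorizationMonoid

section MonicOfDegree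

variable (R : Type*) [Semiring R] [Fintype R] [Nontrivial R]

theorem finite_setOf_monic_natDegree_eq (n : ℕ) :
    {p : R[X] | p.Monic ∧ p.natDegree = n}.Finite :=
  Set.finite_coe_iff.mp <|
    .of_equiv _ ((monicEquivDegreeLT n).trans (degreeLTEquiv R n).toEquiv).symm

noncomputable def monicOfDegree (n : ℕ) : Finset R[X] :=
  (finite_setOf_monic_natDegree_eq R n).toFinset

variable {R}

@[simp]
theorem mem_monicOfDegree {n : ℕ} {p : R[X]} :
    p ∈ monicOfDegree R n ↔ p.Monic ∧ p.natDegree = n :=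
  Set.Finite.mem_toFinset _

theorem coe_monicOfDegree (n : ℕ) :
    (monicOfDegree R n : Set R[X]) = {p | p.Monic ∧ p.natDegree = n} :=
  Set.Finite.coe_toFinset _

theorem card_monicOfDegree (n : ℕ) : #(monicOfDegree R n) = Fintype.card R ^ n := by
  rw [monicOfDegree, ← Set.ncard_eq_toFinset_card _ (finite_setOf_monic_natDegree_eq R n),
    ← Nat.card_coe_set_eq]
  exact (Nat.card_congr ((monicEquivDegreeLT n).trans (degreeLTEquiv R n).toEquiv)).trans
    (by simp)

end MonicOfDegree

theorem card_filter_dvd_monicOfDegree {R : Type*} [CommRing R] [IsDomain R] [Fintype R]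
    {g : R[X]} (hg : g.Monic) {n : ℕ} (hn : g.natDegree ≤ n) :
    #{f ∈ monicOfDegree R n | g ∣ f} = Fintype.card R ^ (n - g.natDegree) := by
  rw [← card_monicOfDegree, eq_comm]
  refine card_bij (fun h _ ↦ g * h) (fun h hh ↦ ?_) (fun _ _ _ _ ↦ mul_left_cancel₀ hg.ne_zero)
    (fun f hf ↦ ?_)
  · obtain ⟨hh, hdeg⟩ := mem_monicOfDegree.mp hh
    simp only [mem_filter, mem_monicOfDegree, hg.mul hh, hg.natDegree_mul hh, hdeg,
      dvd_mul_right, and_true, true_and]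
    omega
  · obtain ⟨⟨hf, hdeg⟩, h, rfl⟩ := by simpa using hf
    have hh := hg.of_mul_monic_left hf
    refine ⟨h, mem_monicOfDegree.mpr ⟨hh, ?_⟩, rfl⟩
    rw [hg.natDegree_mul hh] at hdeg
    omega

section Factorization

variable {K : Type*} [Field K]

theorem Monic.eq_of_dvd_pow {P Q : K[X]} (hP : P.Monic) (hQ : Q.Monic) (hPi : Irreducible P)
    (hQi : Irreducible Q) {k : ℕ} (h : P ∣ Q ^ k) : P = Q :=
  eq_of_monic_of_associated hP hQ (hPi.associated_of_dvd hQi (hPi.prime.dvd_of_dvd_pow h))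

theorem Monic.pow_dvd_iff_le_count_normalizedFactors {P f : K[X]} (hP : P.Monic)
    (hPi : Irreducible P) (hf : f ≠ 0) {j : ℕ} :
    P ^ j ∣ f ↔ j ≤ (normalizedFactors f).count P := by
  rw [pow_dvd_iff_le_emultiplicity, emultiplicity_eq_count_normalizedFactors hPi hf,
    hP.normalize_eq_self, Nat.cast_le]

theorem mk_mem_sigma_normalizedFactors_Icc_count_iff {f P : K[X]} (hf : f ≠ 0) {j : ℕ} :
    (⟨P, j⟩ : (_ : K[X]) × ℕ) ∈
        (normalizedFactors f).toFinset.sigma (fun Q ↦ Icc 1 ((normalizedFactors f).count Q)) ↔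
      Irreducible P ∧ P.Monic ∧ 1 ≤ j ∧ P ^ j ∣ f := by
  simp only [mem_sigma, Multiset.mem_toFinset, mem_Icc, Polynomial.mem_normalizedFactors_iff hf]
  constructor
  · rintro ⟨⟨hPi, hP, -⟩, hj, hle⟩
    exact ⟨hPi, hP, hj, (hP.pow_dvd_iff_le_count_normalizedFactors hPi hf).mpr hle⟩
  · rintro ⟨hPi, hP, hj, hdvd⟩
    exact ⟨⟨hPi, hP, (dvd_pow_self P (by omega)).trans hdvd⟩, hj,
      (hP.pow_dvd_iff_le_count_normalizedFactors hPi hf).mp hdvd⟩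

theorem Monic.sum_count_normalizedFactors_mul_natDegree {f : K[X]} (hf : f.Monic) :
    ∑ P ∈ (normalizedFactors f).toFinset, (normalizedFactors f).count P * P.natDegree =
      f.natDegree := by
  simp_rw [← smul_eq_mul, ← sum_multiset_map_count,
    ← natDegree_multiset_prod _ (zero_notMem_normalizedFactors f),
    prod_normalizedFactors_eq hf.ne_zero, hf.normalize_eq_self]

end Factorization

section VonMangoldt

variable {F : Type} [Field F] [Fintype F]

theorem polyVonMangoldt_pow {P : F[X]} (hP : P.Monic) (hPi : Irreducible P) {j : ℕ}
    (hj : 1 ≤ j) : polyVonMangoldt F (P ^ j) = P.natDegree := by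
  have h : ∃ Q : F[X], Q.Monic ∧ Irreducible Q ∧
      ∃ k : ℕ, 1 ≤ k ∧ ∃ c : F, c ≠ 0 ∧ P ^ j = C c * Q ^ k :=
    ⟨P, hP, hPi, j, hj, 1, one_ne_zero, by rw [C_1, one_mul]⟩
  obtain ⟨hQ, hQi, k, -, c, hc, hPQ⟩ := h.choose_spec
  have hdvd : P ∣ h.choose ^ k :=
    (isUnit_C.mpr hc.isUnit).dvd_mul_left.mp (hPQ ▸ dvd_pow_self P (by omega))
  rw [polyVonMangoldt, dif_pos h]
  exact congrArg natDegree (hP.eq_of_dvd_pow hQ hPi hQi hdvd).symm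

theorem Monic.exists_eq_pow_of_polyVonMangoldt_ne_zero {f : F[X]} (hf : f.Monic)
    (h : polyVonMangoldt F f ≠ 0) :
    ∃ P : F[X], P.Monic ∧ Irreducible P ∧ ∃ j : ℕ, 1 ≤ j ∧ f = P ^ j := by
  obtain ⟨P, hP, hPi, j, hj, c, -, rfl⟩ : ∃ P : F[X], P.Monic ∧ Irreducible P ∧
      ∃ j : ℕ, 1 ≤ j ∧ ∃ c : F, c ≠ 0 ∧ f = C c * P ^ j := by
    by_contra hne
    exact h (dif_neg hne)
  have hc : c = 1 := by simpa [(hP.pow j).leadingCoeff] using hf.leadingCoeff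
  exact ⟨P, hP, hPi, j, hj, by rw [hc, C_1, one_mul]⟩

theorem Monic.sum_range_sum_dvd_polyVonMangoldt {f : F[X]} (hf : f.Monic) :
    ∑ m ∈ range (f.natDegree + 1), ∑ g ∈ monicOfDegree F m with g ∣ f, polyVonMangoldt F g =
      f.natDegree := by
  set T := (normalizedFactors f).toFinset.sigma fun P ↦ Icc 1 ((normalizedFactors f).count P)
  have hT {P : F[X]} {j : ℕ} := mk_mem_sigma_normalizedFactors_Icc_count_iff (P := P) (j := j)
    hf.ne_zero
  calc _ = ∑ x ∈ (range (f.natDegree + 1)).sigma (fun m ↦ {g ∈ monicOfDegree F m | g ∣ f}),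
        polyVonMangoldt F x.2 := sum_sigma' _ _ _
    _ = ∑ x ∈ T, x.1.natDegree := by
        symm
        refine sum_bij_ne_zero (fun x _ _ ↦ ⟨(x.1 ^ x.2).natDegree, x.1 ^ x.2⟩) ?_ ?_ ?_ ?_
        · rintro ⟨P, j⟩ hPj -
          obtain ⟨-, hP, -, hdvd⟩ := hT.mp hPj
          simp only [mem_sigma, mem_range, mem_filter, mem_monicOfDegree]
          exact ⟨Nat.lt_succ_of_le (natDegree_le_of_dvd hdvd hf.ne_zero), ⟨hP.pow j, trivial⟩,
            hdvd⟩
        · rintro ⟨P, j⟩ hPj - ⟨Q, k⟩ hQk - h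
          obtain ⟨hPi, hP, hj, -⟩ := hT.mp hPj
          obtain ⟨hQi, hQ, -, -⟩ := hT.mp hQk
          have hpow : P ^ j = Q ^ k := congrArg Sigma.snd h
          obtain rfl : P = Q :=
            hP.eq_of_dvd_pow hQ hPi hQi (hpow ▸ dvd_pow_self P (Nat.one_le_iff_ne_zero.mp hj))
          rw [(pow_inj_of_not_isUnit hPi.not_isUnit hPi.ne_zero).mp hpow]
        · rintro ⟨m, g⟩ hg hΛ
          obtain ⟨-, ⟨hgm, rfl⟩, hgf⟩ := by simpa using hg
          obtain ⟨P, hP, hPi, j, hj, rfl⟩ := hgm.exists_eq_pow_of_polyVonMangoldt_ne_zero hΛ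
          exact ⟨⟨P, j⟩, hT.mpr ⟨hPi, hP, hj, hgf⟩, hPi.natDegree_pos.ne', rfl⟩
        · rintro ⟨P, j⟩ hPj -
          obtain ⟨hPi, hP, hj, -⟩ := hT.mp hPj
          exact (polyVonMangoldt_pow hP hPi hj).symm
    _ = ∑ P ∈ (normalizedFactors f).toFinset, (normalizedFactors f).count P * P.natDegree := by
        simp [T, sum_sigma]
    _ = f.natDegree := hf.sum_count_normalizedFactors_mul_natDegree

theorem sum_range_sum_monicOfDegree_polyVonMangoldt_mul_pow (n : ℕ) :
    ∑ m ∈ range (n + 1), (∑ g ∈ monicOfDegree F m, polyVonMangoldt F g) *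
      Fintype.card F ^ (n - m) = n * Fintype.card F ^ n := by
  calc _ = ∑ m ∈ range (n + 1), ∑ g ∈ monicOfDegree F m,
        ∑ f ∈ monicOfDegree F n with g ∣ f, polyVonMangoldt F g := by
        refine sum_congr rfl fun m hm ↦ ?_
        rw [sum_mul]
        refine sum_congr rfl fun g hg ↦ ?_
        obtain ⟨hgm, rfl⟩ := mem_monicOfDegree.mp hg
        rw [sum_const, card_filter_dvd_monicOfDegree hgm (by simpa [Nat.lt_succ_iff] using hm),
          smul_eq_mul, mul_comm]
    _ = ∑ f ∈ monicOfDegree F n, ∑ m ∈ range (n + 1),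
        ∑ g ∈ monicOfDegree F m with g ∣ f, polyVonMangoldt F g := by
        simp only [sum_filter]
        exact (sum_congr rfl fun _ _ ↦ sum_comm).trans sum_comm
    _ = ∑ f ∈ monicOfDegree F n, n := sum_congr rfl fun f hf ↦ by
        obtain ⟨hfm, rfl⟩ := mem_monicOfDegree.mp hf
        exact hfm.sum_range_sum_dvd_polyVonMangoldt
    _ = n * Fintype.card F ^ n := by rw [sum_const, card_monicOfDegree, smul_eq_mul, mul_comm]

end VonMangoldt

end Polynomial

theorem Nat.eq_pow_of_sum_range_mul_pow_eq {a : ℕ → ℕ} {q : ℕ}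
    (h : ∀ n, ∑ m ∈ Finset.range (n + 1), a m * q ^ (n - m) = n * q ^ n) (n : ℕ) :
    a (n + 1) = q ^ (n + 1) := by
  have hshift : ∑ m ∈ Finset.range (n + 1), a m * q ^ (n + 1 - m) = n * q ^ (n + 1) := by
    rw [pow_succ, ← mul_assoc, ← h n, Finset.sum_mul]
    refine Finset.sum_congr rfl fun m hm ↦ ?_
    rw [Nat.sub_add_comm (by simpa [Nat.lt_succ_iff] using hm), pow_succ, mul_assoc]
  have := h (n + 1)
  rw [Finset.sum_range_succ, hshift, Nat.sub_self, pow_zero, mul_one] at this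
  linarith

/-- For every `n ≥ 1`, the sum of `Λ(f)` over all monic
polynomials `f` of degree `n` in `𝔽_q[x]` equals `q^n`. -/
theorem sum_vonMangoldt_monic_degree (F : Type) [Field F] [Fintype F]
    (n : ℕ) (hn : 1 ≤ n) :
    ∑ᶠ f ∈ {f : F[X] | f.Monic ∧ f.natDegree = n}, polyVonMangoldt F f =
      Fintype.card F ^ n := by
  obtain ⟨k, rfl⟩ : ∃ k, n = k + 1 := ⟨n - 1, by omega⟩
  rw [← coe_monicOfDegree, finsum_mem_coe_finset]
  exact Nat.eq_pow_of_sum_range_mul_pow_eq sum_range_sum_monicOfDegree_polyVonMangoldt_mul_pow k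
end

section
/- (Function field Mertens theorem) As X → ∞, ∏_{deg P ≤ X} (1 - 1/|P|)^{-1} = e^γ X + O(1), where the product is over monic irreducible polynomials P of degree at most X and γ is the Euler–Mascheroni constant. -/
open Polynomial Finset

namespace MertensFF

variable (F : Type) [Field F] [Fintype F]

lemma finite_natDegree_le (n : ℕ) : {P : F[X] | P.natDegree ≤ n}.Finite := by
  have h : Set.InjOn (fun P : F[X] => fun i : Fin (n+1) => P.coeff i)
      {P : F[X] | P.natDegree ≤ n} := by
    intro P hP Q hQ h
    simp only [Set.mem_setOf_eq] at hP hQ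
    ext k
    by_cases hk : k ≤ n
    · exact congrFun h ⟨k, Nat.lt_succ_of_le hk⟩
    · rw [P.coeff_eq_zero_of_natDegree_lt (lt_of_le_of_lt hP (by omega)),
        Q.coeff_eq_zero_of_natDegree_lt (lt_of_le_of_lt hQ (by omega))]
  exact Set.Finite.of_finite_image (Set.toFinite _) h

lemma finite_irr (d : ℕ) :
    {P : F[X] | P.Monic ∧ Irreducible P ∧ P.natDegree = d}.Finite :=
  (finite_natDegree_le F d).subset (fun _ hP => le_of_eq hP.2.2)

/-- The finite set of monic irreducible polynomials of degree `d`. -/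
noncomputable def irrF (d : ℕ) : Finset F[X] := (finite_irr F d).toFinset

lemma mem_irrF {d : ℕ} {P : F[X]} :
    P ∈ irrF F d ↔ P.Monic ∧ Irreducible P ∧ P.natDegree = d := by
  simp [irrF, Set.Finite.mem_toFinset]

theorem count (m : ℕ) (hm : 1 ≤ m) :
    ∑ d ∈ m.divisors, d * (irrF F d).card = Fintype.card F ^ m := by
  classical
  set q := Fintype.card F with hqdef
  have hq : 1 < q := Fintype.one_lt_card
  have hqm : 1 < q ^ m := Nat.one_lt_pow (by omega) hq
  set p := ringChar F with hp
  have hpprime : p.Prime := CharP.char_is_prime F p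
  haveI : Fact p.Prime := ⟨hpprime⟩
  haveI : CharP F p := ringChar.charP F
  obtain ⟨a, -, ha⟩ := FiniteField.card F p
  have hqa : q = p ^ (a : ℕ) := ha
  have hqm_pow : q ^ m = p ^ ((a : ℕ) * m) := by rw [hqa, ← pow_mul]
  set g : F[X] := X ^ (q ^ m) - X with hgdef
  have hgne : g ≠ 0 := FiniteField.X_pow_card_sub_X_ne_zero F hqm
  set K := g.SplittingField with hK
  have hsplit : Splits (g.map (algebraMap F K)) := SplittingField.splits g
  have hsep : g.Separable := galois_poly_separable p (q^m)
    (by rw [hqm_pow]; exact dvd_pow_self p (by positivity))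
  haveI : FiniteDimensional F K := inferInstance
  haveI : Finite K := Module.finite_of_finite F
  haveI : Fintype K := Fintype.ofFinite K
  haveI : CharP K p := charP_of_injective_algebraMap (algebraMap F K).injective p
  have hfix : ∀ x : K, x ^ q ^ m = x := by
    let ψ : K →ₐ[F] K :=
      { toFun := fun x => x ^ q ^ m
        map_one' := one_pow _
        map_mul' := fun x y => mul_pow x y _
        map_zero' := zero_pow (by positivity)
        map_add' := fun x y => by rw [hqm_pow]; exact add_pow_char_pow x y p ((a:ℕ)*m)
        commutes' := fun c => by
          show (algebraMap F K) c ^ q ^ m = (algebraMap F K) c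
          rw [← map_pow, FiniteField.pow_card_pow] }
    have hroot : g.rootSet K ⊆ ↑(AlgHom.equalizer ψ (AlgHom.id F K)) := by
      intro x hx
      rw [mem_rootSet] at hx
      have h2 := hx.2
      simp only [hgdef, map_sub, map_pow, aeval_X, sub_eq_zero] at h2
      exact h2
    have htop : (⊤ : Subalgebra F K) ≤ AlgHom.equalizer ψ (AlgHom.id F K) := by
      rw [← IsSplittingField.adjoin_rootSet K g]
      exact Algebra.adjoin_le hroot
    intro x
    exact htop (show x ∈ (⊤ : Subalgebra F K) from trivial)
  have hcardK : Fintype.card K = q ^ m := by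
    have huniv : g.rootSet K = Set.univ :=
      Set.eq_univ_of_forall (fun x => (mem_rootSet).mpr ⟨hgne, by
        simp only [hgdef, map_sub, map_pow, aeval_X, sub_eq_zero]; exact hfix x⟩)
    have h1 : Fintype.card (g.rootSet K) = g.natDegree := card_rootSet_eq_natDegree hsep hsplit
    have h2 : g.natDegree = q ^ m := FiniteField.X_pow_card_sub_X_natDegree_eq F hqm
    have h1' : Nat.card (g.rootSet K) = q ^ m := by rw [Nat.card_eq_fintype_card, h1, h2]
    rw [huniv, Nat.card_univ] at h1'
    rw [← h1', Nat.card_eq_fintype_card]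
  have hrank : Module.finrank F K = m := by
    have hc := Module.card_eq_pow_finrank (K := F) (V := K)
    rw [hcardK] at hc
    exact (Nat.pow_right_injective hq hc).symm
  -- fiber cardinality
  have hfiber : ∀ P : F[X], P.Monic → Irreducible P → P.natDegree ∣ m →
      (univ.filter fun x : K => minpoly F x = P).card = P.natDegree := by
    intro P hPm hPi hPd
    haveI : Fact (Irreducible P) := ⟨hPi⟩
    have hPne : P ≠ 0 := hPi.ne_zero
    set E := AdjoinRoot P with hE
    haveI : FiniteDimensional F E := Module.Finite.of_basis (AdjoinRoot.powerBasis hPne).basis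
    haveI : Finite E := Module.finite_of_finite F
    haveI : Fintype E := Fintype.ofFinite E
    have hrankE : Module.finrank F E = P.natDegree := by
      rw [(AdjoinRoot.powerBasis hPne).finrank, AdjoinRoot.powerBasis_dim]
    have hcardE : Fintype.card E = q ^ P.natDegree := by
      rw [Module.card_eq_pow_finrank (K := F) (V := E), hrankE]
    have hroot : (AdjoinRoot.root P) ^ q ^ m = AdjoinRoot.root P := by
      obtain ⟨t, ht⟩ := hPd
      rw [ht, pow_mul, ← hcardE]
      exact FiniteField.pow_card_pow t _
    have hmin : minpoly F (AdjoinRoot.root P) = P := by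
      rw [AdjoinRoot.minpoly_root hPne, hPm.leadingCoeff, inv_one, C_1, mul_one]
    have hdvd : P ∣ g := by
      rw [← hmin]
      exact minpoly.dvd F _ (by
        simp only [hgdef, map_sub, map_pow, aeval_X, sub_eq_zero]; exact hroot)
    have hPsplits : Splits (P.map (algebraMap F K)) :=
        hsplit.of_dvd (Polynomial.map_ne_zero hgne) (Polynomial.map_dvd _ hdvd)
    have hPsep : P.Separable := PerfectField.separable_of_irreducible hPi
    have hcard : Fintype.card (P.rootSet K) = P.natDegree :=
      card_rootSet_eq_natDegree hPsep hPsplits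
    have hiff : ∀ x : K, minpoly F x = P ↔ x ∈ P.rootSet K := by
      intro x
      constructor
      · intro h
        rw [mem_rootSet]
        exact ⟨hPne, by rw [← h]; exact minpoly.aeval F x⟩
      · intro h
        exact (minpoly.eq_of_irreducible_of_monic hPi ((mem_rootSet).mp h).2 hPm).symm
    calc (univ.filter fun x : K => minpoly F x = P).card
        = Fintype.card {x : K // minpoly F x = P} := (Fintype.card_subtype _).symm
      _ = Fintype.card (P.rootSet K) := Fintype.card_congr (Equiv.subtypeEquivRight hiff)
      _ = P.natDegree := hcard
  -- assemble
  set B : Finset F[X] := (m.divisors).biUnion (fun d => irrF F d) with hB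
  have hmapsto : ∀ x : K, minpoly F x ∈ B := by
    intro x
    have hint : IsIntegral F x := IsIntegral.of_finite F x
    have h3 : (minpoly F x).natDegree ∣ m := hrank ▸ minpoly.degree_dvd hint
    rw [hB, Finset.mem_biUnion]
    exact ⟨(minpoly F x).natDegree, Nat.mem_divisors.mpr ⟨h3, by omega⟩,
      (mem_irrF F).mpr ⟨minpoly.monic hint, minpoly.irreducible hint, rfl⟩⟩
  have hcount : Fintype.card K = ∑ P ∈ B, (univ.filter fun x : K => minpoly F x = P).card := by
    rw [← Finset.card_univ]
    exact Finset.card_eq_sum_card_fiberwise (fun x _ => hmapsto x)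
  have hstep : ∑ P ∈ B, (univ.filter fun x : K => minpoly F x = P).card
      = ∑ P ∈ B, P.natDegree := by
    refine Finset.sum_congr rfl (fun P hP => ?_)
    rw [hB, Finset.mem_biUnion] at hP
    obtain ⟨d, hd, hPd⟩ := hP
    obtain ⟨h1, h2, h3⟩ := (mem_irrF F).mp hPd
    exact hfiber P h1 h2 (h3 ▸ (Nat.mem_divisors.mp hd).1)
  have hdisj : (↑m.divisors : Set ℕ).PairwiseDisjoint (irrF F) := by
    intro d1 _ d2 _ hne
    simp only [Function.onFun]
    rw [Finset.disjoint_left]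
    intro P h1 h2
    exact hne (((mem_irrF F).mp h1).2.2.symm.trans ((mem_irrF F).mp h2).2.2)
  have hsplitB : ∑ P ∈ B, P.natDegree = ∑ d ∈ m.divisors, d * (irrF F d).card := by
    rw [hB, Finset.sum_biUnion hdisj]
    refine Finset.sum_congr rfl (fun d _ => ?_)
    rw [Finset.sum_congr rfl (fun P hP => ((mem_irrF F).mp hP).2.2), Finset.sum_const,
      smul_eq_mul, mul_comm]
  rw [← hsplitB, ← hstep, ← hcount, hcardK]



noncomputable def TT (q d : ℕ) : ℝ := -Real.log (1 - ((q:ℝ)⁻¹)^d)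

lemma x_facts {q : ℕ} (hq : 2 ≤ q) {d : ℕ} (hd : 1 ≤ d) :
    0 < ((q:ℝ)⁻¹)^d ∧ ((q:ℝ)⁻¹)^d ≤ 1/2 := by
  have hq0 : (0:ℝ) < q := by positivity
  have hx0 : (0:ℝ) < (q:ℝ)⁻¹ := by positivity
  have hx : (q:ℝ)⁻¹ ≤ 1/2 := by
    rw [inv_le_comm₀ hq0 (by norm_num)]
    · norm_num; exact_mod_cast hq
  constructor
  · positivity
  · calc ((q:ℝ)⁻¹)^d ≤ ((q:ℝ)⁻¹)^1 :=
        pow_le_pow_of_le_one hx0.le (hx.trans (by norm_num)) hd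
    _ = (q:ℝ)⁻¹ := pow_one _
    _ ≤ 1/2 := hx

lemma hasSum_TT {q : ℕ} (hq : 2 ≤ q) {d : ℕ} (hd : 1 ≤ d) :
    HasSum (fun k : ℕ => (((q:ℝ)⁻¹)^d)^(k+1)/((k:ℝ)+1)) (TT q d) := by
  obtain ⟨h0, h1⟩ := x_facts hq hd
  exact Real.hasSum_pow_div_log_of_abs_lt_one
    (by rw [abs_of_pos h0]; linarith)

lemma TT_partial {q : ℕ} (hq : 2 ≤ q) {d : ℕ} (hd : 1 ≤ d) (K : ℕ) :
    ∃ t : ℝ, TT q d = (∑ k ∈ range K, (((q:ℝ)⁻¹)^d)^(k+1)/((k:ℝ)+1)) + t ∧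
      0 ≤ t ∧ t ≤ 2 * (((q:ℝ)⁻¹)^d)^(K+1)/((K:ℝ)+1) := by
  obtain ⟨h0, h1⟩ := x_facts hq hd
  set y : ℝ := ((q:ℝ)⁻¹)^d with hy
  have hy1 : y < 1 := by linarith
  have hs := hasSum_TT hq hd
  have hsum : Summable (fun k : ℕ => y^(k+1)/((k:ℝ)+1)) := hs.summable
  refine ⟨∑' i : ℕ, y^(i+K+1)/((↑(i+K):ℝ)+1), ?_, ?_, ?_⟩
  · have := hsum.sum_add_tsum_nat_add K
    rw [hs.tsum_eq] at this
    rw [← this]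
  · exact tsum_nonneg (fun i => by positivity)
  · have hsg : Summable (fun i : ℕ => y^(K+1)/((K:ℝ)+1) * y^i) :=
      (summable_geometric_of_lt_one h0.le hy1).mul_left _
    have hst : Summable (fun i : ℕ => y^(i+K+1)/((↑(i+K):ℝ)+1)) :=
      (summable_nat_add_iff K).mpr hsum
    calc (∑' i : ℕ, y^(i+K+1)/((↑(i+K):ℝ)+1))
        ≤ ∑' i : ℕ, y^(K+1)/((K:ℝ)+1) * y^i := by
          refine Summable.tsum_le_tsum (fun i => ?_) hst hsg
          calc y^(i+K+1)/((↑(i+K):ℝ)+1) ≤ y^(i+K+1)/((K:ℝ)+1) := by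
                gcongr
                omega
            _ = y^(K+1)/((K:ℝ)+1) * y^i := by
                rw [show y^(i+K+1) = y^(K+1)*y^i by ring]; ring
      _ = y^(K+1)/((K:ℝ)+1) * (1-y)⁻¹ := by
          rw [tsum_mul_left, tsum_geometric_of_lt_one h0.le hy1]
      _ ≤ y^(K+1)/((K:ℝ)+1) * 2 := by
          refine mul_le_mul_of_nonneg_left ?_ (by positivity)
          rw [inv_le_comm₀ (by linarith) (by norm_num)]
          linarith
      _ = 2 * y^(K+1)/((K:ℝ)+1) := by ring



-- harmonic cast and gamma bound
lemma harmonic_eq (n : ℕ) : ((harmonic n : ℚ) : ℝ) = ∑ m ∈ Icc 1 n, (1:ℝ)/m := by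
  rw [harmonic, ← Finset.Ico_add_one_right_eq_Icc, Finset.sum_Ico_eq_sum_range]
  push_cast
  refine Finset.sum_congr rfl (fun k _ => ?_)
  rw [add_comm, one_div]

lemma gamma_bound {n : ℕ} (hn : 1 ≤ n) :
    |(∑ m ∈ Icc 1 n, (1:ℝ)/m) - Real.log n - Real.eulerMascheroniConstant| ≤ 1 / n := by
  have hn0 : (0:ℝ) < n := by exact_mod_cast hn
  have h1 := Real.eulerMascheroniSeq_lt_eulerMascheroniConstant n
  have h2 := Real.eulerMascheroniConstant_lt_eulerMascheroniSeq' n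
  rw [Real.eulerMascheroniSeq] at h1
  rw [Real.eulerMascheroniSeq', if_neg (by omega)] at h2
  rw [← harmonic_eq]
  have hlog : Real.log (n+1) - Real.log n ≤ 1 / n := by
    rw [← Real.log_div (by positivity) (by positivity)]
    have : (↑n+1)/(n:ℝ) = 1 + 1/n := by field_simp
    rw [this]
    have := Real.log_le_sub_one_of_pos (x := 1 + 1/n) (by positivity)
    linarith
  rw [abs_le]
  constructor
  · have : ((harmonic n : ℚ):ℝ) - Real.log n > Real.eulerMascheroniConstant := h2
    have h0 : (0:ℝ) ≤ 1/n := by positivity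
    linarith
  · have : ((harmonic n : ℚ):ℝ) - Real.log (n+1) < Real.eulerMascheroniConstant := h1
    linarith



-- Sum over the "hyperbola" region, two decompositions
def DD (n : ℕ) : Finset (ℕ × ℕ) := (Icc 1 n).biUnion (fun m => m.divisorsAntidiagonal)

lemma mem_DD {n : ℕ} {p : ℕ × ℕ} : p ∈ DD n ↔ 1 ≤ p.1 * p.2 ∧ p.1 * p.2 ≤ n := by
  simp only [DD, Finset.mem_biUnion, Finset.mem_Icc, Nat.mem_divisorsAntidiagonal]
  constructor
  · rintro ⟨m, ⟨h1, h2⟩, h3, h4⟩; omega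
  · intro ⟨h1, h2⟩; exact ⟨p.1 * p.2, ⟨h1, h2⟩, rfl, by omega⟩

lemma DD_sum_left {M : Type*} [AddCommMonoid M] (n : ℕ) (f : ℕ × ℕ → M) :
    ∑ p ∈ DD n, f p = ∑ m ∈ Icc 1 n, ∑ p ∈ m.divisorsAntidiagonal, f p := by
  refine Finset.sum_biUnion ?_
  intro m1 _ m2 _ hne
  simp only [Function.onFun]
  rw [Finset.disjoint_left]
  intro p h1 h2
  rw [Nat.mem_divisorsAntidiagonal] at h1 h2
  exact hne (h1.1.symm.trans h2.1)

lemma DD_decomp (n : ℕ) :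
    DD n = (Icc 1 n).biUnion (fun d => (Icc 1 (n/d)).image (fun k => (d, k))) := by
  ext p
  rw [mem_DD]
  simp only [Finset.mem_biUnion, Finset.mem_Icc, Finset.mem_image]
  constructor
  · rintro ⟨h1, h2⟩
    have hd1 : 1 ≤ p.1 := by
      rcases Nat.eq_zero_or_pos p.1 with h | h
      · rw [h, zero_mul] at h1; omega
      · exact h
    have hk1 : 1 ≤ p.2 := by
      rcases Nat.eq_zero_or_pos p.2 with h | h
      · rw [h, mul_zero] at h1; omega
      · exact h
    refine ⟨p.1, ⟨hd1, le_trans (Nat.le_mul_of_pos_right _ (by omega)) h2⟩,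
      p.2, ⟨hk1, (Nat.le_div_iff_mul_le (by omega)).mpr (by rwa [mul_comm])⟩, rfl⟩
  · rintro ⟨d, ⟨hd1, hdn⟩, k, ⟨hk1, hkd⟩, rfl⟩
    have h := (Nat.le_div_iff_mul_le (by omega : 0 < d)).mp hkd
    exact ⟨Nat.mul_pos hd1 hk1, by rw [show (d,k).1 * (d,k).2 = k * d by ring]; exact h⟩

lemma DD_sum_right {M : Type*} [AddCommMonoid M] (n : ℕ) (f : ℕ × ℕ → M) :
    ∑ p ∈ DD n, f p = ∑ d ∈ Icc 1 n, ∑ k ∈ Icc 1 (n/d), f (d, k) := by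
  rw [DD_decomp]
  rw [Finset.sum_biUnion (by
    intro d1 _ d2 _ hne
    simp only [Function.onFun]
    rw [Finset.disjoint_left]
    intro p h1 h2
    simp only [Finset.mem_image] at h1 h2
    obtain ⟨k1, _, hk1⟩ := h1
    obtain ⟨k2, _, hk2⟩ := h2
    apply hne
    rw [← hk2] at hk1
    exact (congrArg Prod.fst hk1 : _))]
  refine Finset.sum_congr rfl (fun d _ => ?_)
  rw [Finset.sum_image (fun a _ b _ h => (congrArg Prod.snd h : _))]


section
variable {q : ℕ} (hq : 2 ≤ q) (π : ℕ → ℕ)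
  (hkey : ∀ m, 1 ≤ m → ∑ d ∈ m.divisors, d * π d = q ^ m)
include hq hkey in
theorem Lsum_close : ∀ n : ℕ, 1 ≤ n →
    |(∑ d ∈ Icc 1 n, (π d : ℝ) * TT q d) - Real.log n - Real.eulerMascheroniConstant| ≤ 3 / n := by
  intro n hn
  have hq0 : (0:ℝ) < q := by positivity
  have hn0 : (0:ℝ) < n := by exact_mod_cast hn
  set x : ℝ := (q:ℝ)⁻¹ with hxdef
  have hx0 : 0 < x := by positivity
  have hxq : x * q = 1 := inv_mul_cancel₀ (by positivity)
  have hx2 : x ≤ 1/2 := by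
    have := (x_facts hq (le_refl 1)).2
    rwa [pow_one] at this
  have hx1 : x < 1 := by linarith
  -- the π upper bound
  have hπ : ∀ d : ℕ, 1 ≤ d → (d : ℝ) * π d ≤ (q:ℝ)^d := by
    intro d hd
    have h1 : d * π d ≤ q ^ d := by
      rw [← hkey d hd]
      exact Finset.single_le_sum (f := fun i => i * π i) (fun i _ => Nat.zero_le _)
        (Nat.mem_divisors_self d (by omega))
    exact_mod_cast h1
  -- per-m identity
  have hident : ∀ m : ℕ, 1 ≤ m →
      (1:ℝ)/m = ∑ p ∈ m.divisorsAntidiagonal, (π p.1 : ℝ) * x^(p.1*p.2) / p.2 := by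
    intro m hm
    have hstep : ∀ p ∈ m.divisorsAntidiagonal,
        (π p.1 : ℝ) * x^(p.1*p.2) / p.2 = ((p.1 * π p.1 : ℕ) : ℝ) * (x^m / m) := by
      intro p hp
      rw [Nat.mem_divisorsAntidiagonal] at hp
      obtain ⟨hpm, hm0⟩ := hp
      have hp2 : 1 ≤ p.2 := by
        rcases Nat.eq_zero_or_pos p.2 with h | h
        · rw [h, mul_zero] at hpm; omega
        · exact h
      have hp1 : 1 ≤ p.1 := by
        rcases Nat.eq_zero_or_pos p.1 with h | h
        · rw [h, zero_mul] at hpm; omega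
        · exact h
      have hp2R : ((p.2:ℝ)) ≠ 0 := by positivity
      have hp1R : ((p.1:ℝ)) ≠ 0 := by positivity
      rw [← hpm]
      push_cast
      field_simp
    rw [Finset.sum_congr rfl hstep, ← Finset.sum_mul]
    have hsum : ∑ p ∈ m.divisorsAntidiagonal, ((p.1 * π p.1 : ℕ) : ℝ)
        = ((q:ℕ):ℝ)^m := by
      rw [← Nat.cast_pow, ← hkey m hm]
      push_cast
      exact Nat.sum_divisorsAntidiagonal (fun a b => (a : ℝ) * π a)
    rw [hsum, hxdef, inv_pow]
    have hmR : ((m:ℝ)) ≠ 0 := by positivity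
    field_simp
  -- H as hyperbola sum
  set f : ℕ × ℕ → ℝ := fun p => (π p.1 : ℝ) * x^(p.1*p.2) / p.2 with hfdef
  have hH : ∑ m ∈ Icc 1 n, (1:ℝ)/m = ∑ p ∈ DD n, f p := by
    rw [DD_sum_left n f]
    exact Finset.sum_congr rfl (fun m hm => hident m (Finset.mem_Icc.mp hm).1)
  -- partial sums of TT
  have hTT : ∀ d ∈ Icc 1 n, ∃ t : ℝ,
      (π d : ℝ) * TT q d = (∑ k ∈ Icc 1 (n/d), f (d, k)) + (π d : ℝ) * t ∧
      0 ≤ (π d : ℝ) * t ∧ (π d : ℝ) * t ≤ 2 * x^(n+1) * (q:ℝ)^d / n := by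
    intro d hd
    rw [Finset.mem_Icc] at hd
    obtain ⟨hd1, hdn⟩ := hd
    obtain ⟨t, ht, ht0, htb⟩ := TT_partial hq hd1 (n/d)
    have hdR : (0:ℝ) < d := by exact_mod_cast hd1
    set K := n / d with hK
    have hKd : n + 1 ≤ d * (K + 1) := by
      have h1 := Nat.div_add_mod n d
      have h2 := Nat.mod_lt n (show 0 < d by omega)
      rw [hK, Nat.mul_succ]
      omega
    -- rewrite partial sum
    have hpartial : ∑ k ∈ range K, (x^d)^(k+1)/((k:ℝ)+1) = ∑ k ∈ Icc 1 K, x^(d*k)/(k:ℝ) := by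
      rw [← Finset.Ico_add_one_right_eq_Icc, Finset.sum_Ico_eq_sum_range]
      refine Finset.sum_congr rfl (fun k _ => ?_)
      rw [Nat.add_comm 1 k, ← pow_mul]
      push_cast
      ring
    refine ⟨t, ?_, mul_nonneg (by positivity) ht0, ?_⟩
    · rw [ht, mul_add, hpartial, Finset.mul_sum]
      congr 1
      refine Finset.sum_congr rfl (fun k _ => ?_)
      rw [hfdef]
      simp only
      rw [mul_div_assoc]
    · calc (π d : ℝ) * t ≤ (π d : ℝ) * (2 * (x^d)^(K+1)/((K:ℝ)+1)) :=
            mul_le_mul_of_nonneg_left htb (by positivity)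
        _ ≤ ((q:ℝ)^d / d) * (2 * x^(n+1) * (d / n)) := by
            have hb1 : (x^d)^(K+1) ≤ x^(n+1) := by
              rw [← pow_mul]
              exact pow_le_pow_of_le_one hx0.le hx1.le hKd
            have hb2 : (1:ℝ)/((K:ℝ)+1) ≤ d / n := by
              rw [div_le_div_iff₀ (by positivity) hn0]
              have : (n:ℝ) ≤ d * ((K:ℝ)+1) := by
                have : ((n:ℕ):ℝ) + 1 ≤ ((d * (K+1) : ℕ) : ℝ) := by exact_mod_cast hKd
                push_cast at this
                linarith
              linarith
            have hπd : (π d : ℝ) ≤ (q:ℝ)^d / d := by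
              rw [le_div_iff₀ hdR]
              have := hπ d hd1
              linarith
            calc (π d : ℝ) * (2 * (x^d)^(K+1)/((K:ℝ)+1))
                ≤ ((q:ℝ)^d / d) * (2 * (x^d)^(K+1)/((K:ℝ)+1)) := by
                  refine mul_le_mul_of_nonneg_right hπd (by positivity)
              _ ≤ ((q:ℝ)^d / d) * (2 * x^(n+1) * (d / n)) := by
                  refine mul_le_mul_of_nonneg_left ?_ (by positivity)
                  have h3 : (x^d)^(K+1) * (1/((K:ℝ)+1)) ≤ x^(n+1) * ((d:ℝ)/n) :=
                    mul_le_mul hb1 hb2 (by positivity) (by positivity)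
                  calc 2*(x^d)^(K+1)/((K:ℝ)+1) = 2 * ((x^d)^(K+1) * (1/((K:ℝ)+1))) := by ring
                    _ ≤ 2 * (x^(n+1) * ((d:ℝ)/n)) := by linarith
                    _ = 2 * x^(n+1) * ((d:ℝ)/n) := by ring
        _ = 2 * x^(n+1) * (q:ℝ)^d / n := by field_simp
  -- choose tails
  have hchoice : ∀ d ∈ Icc 1 n, ∃ e : ℝ,
      (π d : ℝ) * TT q d = (∑ k ∈ Icc 1 (n/d), f (d, k)) + e ∧
      0 ≤ e ∧ e ≤ 2 * x^(n+1) * (q:ℝ)^d / n := by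
    intro d hd
    obtain ⟨t, h1, h2, h3⟩ := hTT d hd
    exact ⟨(π d : ℝ) * t, h1, h2, h3⟩
  choose e he1 he2 he3 using hchoice
  have hsplit : ∑ d ∈ Icc 1 n, (π d : ℝ) * TT q d
      = (∑ m ∈ Icc 1 n, (1:ℝ)/m) + ∑ d ∈ (Icc 1 n).attach, e d.1 d.2 := by
    rw [hH, DD_sum_right n f, ← Finset.sum_attach (Icc 1 n) (fun d => ∑ k ∈ Icc 1 (n/d), f (d, k)),
      ← Finset.sum_add_distrib, ← Finset.sum_attach (Icc 1 n) (fun d => (π d : ℝ) * TT q d)]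
    exact Finset.sum_congr rfl (fun d _ => he1 d.1 d.2)
  have hgeo : ∀ N : ℕ, ∑ d ∈ Icc 1 N, (q:ℝ)^d ≤ 2 * (q:ℝ)^N := by
    intro N
    induction N with
    | zero => rw [show Icc 1 0 = (∅ : Finset ℕ) from rfl]; simp
    | succ N ih =>
      rw [Finset.sum_Icc_succ_top (by omega)]
      have hqn : (0:ℝ) < (q:ℝ)^N := by positivity
      have hq2 : (2:ℝ) ≤ q := by exact_mod_cast hq
      rw [pow_succ]
      nlinarith
  have hE : 0 ≤ ∑ d ∈ (Icc 1 n).attach, e d.1 d.2 ∧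
      ∑ d ∈ (Icc 1 n).attach, e d.1 d.2 ≤ 2 / n := by
    constructor
    · exact Finset.sum_nonneg (fun d _ => he2 d.1 d.2)
    · calc ∑ d ∈ (Icc 1 n).attach, e d.1 d.2
          ≤ ∑ d ∈ (Icc 1 n).attach, 2 * x^(n+1) * (q:ℝ)^(d.1) / n :=
            Finset.sum_le_sum (fun d _ => he3 d.1 d.2)
        _ = (2 * x^(n+1) / n) * ∑ d ∈ Icc 1 n, (q:ℝ)^d := by
            rw [Finset.mul_sum, ← Finset.sum_attach (Icc 1 n) (fun d => 2 * x^(n+1) / n * (q:ℝ)^d)]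
            exact Finset.sum_congr rfl (fun d _ => by ring)
        _ ≤ (2 * x^(n+1) / n) * (2 * (q:ℝ)^n) := by
            refine mul_le_mul_of_nonneg_left (hgeo n) (by positivity)
        _ = (4 / n) * (x^(n+1) * (q:ℝ)^n) := by ring
        _ = (4 / n) * x := by
            congr 1
            rw [pow_succ, mul_comm (x^n) x, mul_assoc, ← mul_pow, hxq, one_pow, mul_one]
        _ ≤ 2 / n := by
            rw [div_mul_eq_mul_div, div_le_div_iff_of_pos_right hn0]
            linarith
  rw [hsplit]
  have hγ := gamma_bound hn
  rw [abs_le] at hγ ⊢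
  have h2n : (2:ℝ)/n ≤ 2/n := le_refl _
  constructor
  · have : -(1/(n:ℝ)) ≤ (∑ m ∈ Icc 1 n, (1:ℝ)/m) - Real.log n - Real.eulerMascheroniConstant := hγ.1
    have h3 : (1:ℝ)/n ≤ 3/n := by
      rw [div_le_div_iff_of_pos_right hn0]; norm_num
    have h0 := hE.1
    rw [show ∀ a b c d : ℝ, a + b - c - d = (a - c - d) + b by intros; ring]
    linarith [hγ.1]
  · rw [show ∀ a b c d : ℝ, a + b - c - d = (a - c - d) + b by intros; ring]
    have := hE.2
    have h1 : (1:ℝ)/n + 2/n = 3/n := by ring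
    linarith [hγ.2]
end

end MertensFF

open MertensFF in
/-- Function field Mertens theorem. As `X → ∞`,
`∏_{deg P ≤ X} (1 - 1/|P|)^{-1} = e^γ X + O(1)`, the product being over monic
irreducible polynomials `P` of degree at most `X` in `𝔽_q[x]`. -/
theorem mertens_function_field (F : Type) [Field F] [Fintype F] :
    ∃ C : ℝ, ∀ X : ℕ, 1 ≤ X →
      |(∏ᶠ P ∈ {P : F[X] | P.Monic ∧ Irreducible P ∧ P.natDegree ≤ X},
          (1 - 1 / (Fintype.card F : ℝ) ^ P.natDegree)⁻¹) -
        Real.exp Real.eulerMascheroniConstant * X| ≤ C := by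
  classical
  set q := Fintype.card F with hqdef
  have hq : 2 ≤ q := Fintype.one_lt_card
  have hqR : (2:ℝ) ≤ q := by exact_mod_cast hq
  set γ := Real.eulerMascheroniConstant with hγdef
  have hγ1 : γ ≤ 1 := le_of_lt (lt_trans Real.eulerMascheroniConstant_lt_two_thirds (by norm_num))
  have hγ0 : 0 ≤ γ := le_of_lt (lt_trans (by norm_num) Real.one_half_lt_eulerMascheroniConstant)
  have he1 : Real.exp 1 ≤ 3 := le_of_lt (lt_trans Real.exp_one_lt_d9 (by norm_num))
  refine ⟨Real.exp 5 + 24, fun X hX => ?_⟩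
  have hX0 : (0:ℝ) < X := by exact_mod_cast hX
  -- rewrite the product
  have hfin : {P : F[X] | P.Monic ∧ Irreducible P ∧ P.natDegree ≤ X}.Finite :=
    (finite_natDegree_le F X).subset (fun P hP => hP.2.2)
  have hprod1 : (∏ᶠ P ∈ {P : F[X] | P.Monic ∧ Irreducible P ∧ P.natDegree ≤ X},
      (1 - 1 / (q : ℝ) ^ P.natDegree)⁻¹)
      = ∏ P ∈ hfin.toFinset, (1 - 1 / (q : ℝ) ^ P.natDegree)⁻¹ := by
    exact finprod_mem_eq_finite_toFinset_prod _ hfin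
  have hmaps : ∀ P ∈ hfin.toFinset, P.natDegree ∈ Finset.Icc 1 X := by
    intro P hP
    rw [Set.Finite.mem_toFinset] at hP
    exact Finset.mem_Icc.mpr ⟨hP.2.1.natDegree_pos, hP.2.2⟩
  have hfib : ∀ d ∈ Finset.Icc 1 X,
      hfin.toFinset.filter (fun P => P.natDegree = d) = irrF F d := by
    intro d hd
    rw [Finset.mem_Icc] at hd
    ext P
    rw [Finset.mem_filter, Set.Finite.mem_toFinset, mem_irrF]
    constructor
    · rintro ⟨⟨h1, h2, _⟩, h4⟩; exact ⟨h1, h2, h4⟩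
    · rintro ⟨h1, h2, h3⟩; exact ⟨⟨h1, h2, h3 ▸ hd.2⟩, h3⟩
  have hprod2 : ∏ P ∈ hfin.toFinset, (1 - 1 / (q : ℝ) ^ P.natDegree)⁻¹
      = ∏ d ∈ Finset.Icc 1 X, ((1 - 1 / (q : ℝ) ^ d)⁻¹) ^ ((irrF F d).card) := by
    rw [← Finset.prod_fiberwise_of_maps_to hmaps (fun P => (1 - 1 / (q : ℝ) ^ P.natDegree)⁻¹)]
    refine Finset.prod_congr rfl (fun d hd => ?_)
    rw [← hfib d hd, Finset.prod_congr rfl (fun P hP => ?_), Finset.prod_const]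
    rw [Finset.mem_filter] at hP
    rw [hP.2]
  have hfactor : ∀ d : ℕ, 1 ≤ d →
      ((1 - 1 / (q : ℝ) ^ d)⁻¹) ^ ((irrF F d).card)
        = Real.exp (((irrF F d).card : ℝ) * TT q d) := by
    intro d hd
    obtain ⟨hx0, hx2⟩ := x_facts hq hd
    have hpos : 0 < 1 - ((q:ℝ)⁻¹)^d := by linarith
    have h1 : 1 - 1 / (q : ℝ) ^ d = 1 - ((q:ℝ)⁻¹)^d := by rw [inv_pow, one_div]
    rw [h1, TT, Real.exp_nat_mul, Real.exp_neg, Real.exp_log hpos]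
  have hprod3 : ∏ d ∈ Finset.Icc 1 X, ((1 - 1 / (q : ℝ) ^ d)⁻¹) ^ ((irrF F d).card)
      = Real.exp (∑ d ∈ Finset.Icc 1 X, (((irrF F d).card : ℝ) * TT q d)) := by
    rw [Real.exp_sum]
    exact Finset.prod_congr rfl (fun d hd => hfactor d (Finset.mem_Icc.mp hd).1)
  set L : ℝ := ∑ d ∈ Finset.Icc 1 X, (((irrF F d).card : ℝ) * TT q d) with hLdef
  have hclose : |L - Real.log X - γ| ≤ 3 / X :=
    Lsum_close hq (fun d => (irrF F d).card) (fun m hm => count F m hm) X hX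
  set ε : ℝ := L - Real.log X - γ with hεdef
  have hεb : |ε| ≤ 3 / X := hclose
  have hexpL : Real.exp L = Real.exp γ * X * Real.exp ε := by
    rw [show L = γ + Real.log X + ε by rw [hεdef]; ring, Real.exp_add, Real.exp_add,
      Real.exp_log hX0]
  rw [hprod1, hprod2, hprod3, hexpL]
  have key : Real.exp γ * X * Real.exp ε - Real.exp γ * X
      = Real.exp γ * X * (Real.exp ε - 1) := by ring
  rw [key, abs_mul, abs_of_pos (by positivity : (0:ℝ) < Real.exp γ * X)]
  by_cases hX3 : 3 ≤ X
  · have hX3R : (3:ℝ) ≤ X := by exact_mod_cast hX3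
    have hε1 : |ε| ≤ 1 := hεb.trans (by rw [div_le_one hX0]; linarith)
    have h2 : |Real.exp ε - 1| ≤ 2 * |ε| := Real.abs_exp_sub_one_le hε1
    calc Real.exp γ * X * |Real.exp ε - 1| ≤ Real.exp γ * X * (2 * (3 / X)) := by
          refine mul_le_mul_of_nonneg_left (h2.trans ?_) (by positivity)
          linarith
      _ = 6 * Real.exp γ * (X / X) := by ring
      _ = 6 * Real.exp γ := by rw [div_self (ne_of_gt hX0), mul_one]
      _ ≤ 6 * Real.exp 1 := by
          refine mul_le_mul_of_nonneg_left (Real.exp_le_exp.mpr hγ1) (by norm_num)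
      _ ≤ Real.exp 5 + 24 := by nlinarith [Real.exp_pos (5:ℝ)]
  · -- small X : 1 ≤ X ≤ 2
    have hX2 : X ≤ 2 := by omega
    have hX2R : (X:ℝ) ≤ 2 := by exact_mod_cast hX2
    have hlog2 : Real.log X ≤ 1 := by
      calc Real.log X ≤ Real.log 2 := Real.log_le_log hX0 hX2R
        _ ≤ 1 := le_of_lt (lt_trans Real.log_two_lt_d9 (by norm_num))
    have hX1R : (1:ℝ) ≤ X := by exact_mod_cast hX
    have h3X : 3 / (X:ℝ) ≤ 3 := by
      rw [div_le_iff₀ hX0]; linarith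
    have hL5 : L ≤ 5 := by
      have h1 : L - Real.log X - γ ≤ 3 / X := (abs_le.mp hεb).2
      linarith
    have hub : Real.exp γ * X * |Real.exp ε - 1| ≤ Real.exp γ * X * (Real.exp ε + 1) := by
      refine mul_le_mul_of_nonneg_left ?_ (by positivity)
      rw [abs_le]
      constructor <;> nlinarith [Real.exp_pos ε]
    calc Real.exp γ * X * |Real.exp ε - 1| ≤ Real.exp γ * X * (Real.exp ε + 1) := hub
      _ = Real.exp γ * X * Real.exp ε + Real.exp γ * X := by ring
      _ = Real.exp L + Real.exp γ * X := by rw [hexpL]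
      _ ≤ Real.exp 5 + Real.exp 1 * 2 := by
          have := Real.exp_le_exp.mpr hL5
          have h4 := Real.exp_le_exp.mpr hγ1
          have h5 : Real.exp γ * X ≤ Real.exp 1 * 2 :=
            mul_le_mul h4 hX2R hX0.le (Real.exp_pos 1).le
          linarith
      _ ≤ Real.exp 5 + 24 := by linarith
end

section
/- There exists a constant c such that Σ_{deg P ≤ X} 1/|P| = log X + c + O(1/X), where the sum is over monic irreducible polynomials P in 𝔽_q[x] of degree at most X. -/
open Polynomial UniqueFactorizationMonoid Finset

attribute [local instance] Classical.propDecidable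

section PolyCount

theorem dvd_iff_natDegree_dvd (F : Type) [Field F] [Fintype F] {P : F[X]}
    (hm : P.Monic) (hi : Irreducible P) {n : ℕ} (hn : n ≠ 0) :
    P ∣ (X ^ Fintype.card F ^ n - X) ↔ P.natDegree ∣ n := by
  haveI : Fact (Irreducible P) := ⟨hi⟩
  have hP0 : P ≠ 0 := hm.ne_zero
  set q := Fintype.card F with hq
  set K := AdjoinRoot P with hK
  set α : K := AdjoinRoot.root P with hα
  let b : Module.Basis (Fin P.natDegree) F K := AdjoinRoot.powerBasisAux' hm
  haveI : Fintype K := Module.fintypeOfFintype b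
  have hcard : Fintype.card K = q ^ P.natDegree := by
    rw [Module.card_fintype b, Fintype.card_fin]
  have key : P ∣ (X ^ q ^ n - X) ↔ α ^ q ^ n = α := by
    rw [← AdjoinRoot.mk_eq_zero, map_sub, map_pow, AdjoinRoot.mk_X, sub_eq_zero]
  rw [key]
  constructor
  · -- hard direction
    intro hroot
    set p := ringChar F with hp
    haveI : CharP F p := ringChar.charP F
    obtain ⟨k, hpp, hqk⟩ := FiniteField.card F p
    haveI : Fact p.Prime := ⟨hpp⟩
    haveI : CharP K p := charP_of_injective_algebraMap (algebraMap F K).injective p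
    haveI : ExpChar K p := ExpChar.prime hpp
    have hpow : p ^ ((k : ℕ) * n) = q ^ n := by rw [hq, hqk, pow_mul]
    have hcomm : ∀ a : F, (iterateFrobenius K p ((k : ℕ) * n)) (algebraMap F K a)
        = algebraMap F K a := by
      intro a
      rw [iterateFrobenius_def, ← map_pow, hpow, FiniteField.pow_card_pow]
    let φ : K →ₐ[F] K :=
      { toRingHom := iterateFrobenius K p ((k : ℕ) * n), commutes' := hcomm }
    have hφα : φ α = α := by
      show (iterateFrobenius K p ((k : ℕ) * n)) α = α
      rw [iterateFrobenius_def, hpow]; exact hroot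
    have hφ : φ = AlgHom.id F K := AdjoinRoot.algHom_ext (by rw [AlgHom.id_apply]; exact hφα)
    have hall : ∀ x : K, x ^ q ^ n = x := by
      intro x
      have h1 : φ x = x := by rw [hφ]; rfl
      have h2 : φ x = x ^ q ^ n := by
        show (iterateFrobenius K p ((k : ℕ) * n)) x = x ^ q ^ n
        rw [iterateFrobenius_def, hpow]
      rw [← h2, h1]
    set d := P.natDegree with hd
    have hd0 : 0 < d := hi.natDegree_pos
    have hr : ∀ x : K, x ^ q ^ (n % d) = x := by
      intro x
      have h1 : x ^ q ^ (d * (n / d)) = x := by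
        rw [pow_mul, ← hcard]
        exact FiniteField.pow_card_pow _ x
      calc x ^ q ^ (n % d) = (x ^ q ^ (d * (n / d))) ^ q ^ (n % d) := by rw [h1]
        _ = x ^ (q ^ (d * (n / d)) * q ^ (n % d)) := (pow_mul x _ _).symm
        _ = x ^ q ^ (d * (n / d) + n % d) := by rw [pow_add]
        _ = x ^ q ^ n := by rw [Nat.div_add_mod]
        _ = x := hall x
    by_contra hnd
    have hr0 : n % d ≠ 0 := fun h => hnd (Nat.dvd_of_mod_eq_zero h)
    have hrd : n % d < d := Nat.mod_lt _ hd0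
    have hq1 : 1 < q := Fintype.one_lt_card
    set r := n % d with hrr
    have hne : (X ^ q ^ r - X : K[X]) ≠ 0 :=
      FiniteField.X_pow_card_pow_sub_X_ne_zero K hr0 hq1
    have hdeg : (X ^ q ^ r - X : K[X]).natDegree = q ^ r :=
      FiniteField.X_pow_card_pow_sub_X_natDegree_eq K hr0 hq1
    have hroots : Finset.univ ⊆ (X ^ q ^ r - X : K[X]).roots.toFinset := by
      intro x _
      rw [Multiset.mem_toFinset, mem_roots hne]
      simp [IsRoot, hr x]
    have hle : Fintype.card K ≤ q ^ r := by
      calc Fintype.card K = Finset.univ.card := (Finset.card_univ).symm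
        _ ≤ (X ^ q ^ r - X : K[X]).roots.toFinset.card := Finset.card_le_card hroots
        _ ≤ Multiset.card (X ^ q ^ r - X : K[X]).roots := Multiset.toFinset_card_le _
        _ ≤ (X ^ q ^ r - X : K[X]).natDegree := card_roots' _
        _ = q ^ r := hdeg
    rw [hcard] at hle
    exact absurd hle (not_le.mpr (Nat.pow_lt_pow_right hq1 hrd))
  · rintro ⟨m, rfl⟩
    calc α ^ q ^ (P.natDegree * m) = α ^ (q ^ P.natDegree) ^ m := by rw [pow_mul]
      _ = α ^ (Fintype.card K) ^ m := by rw [hcard]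
      _ = α := FiniteField.pow_card_pow m α


variable (F : Type) [Field F] [Fintype F]

lemma fn_monic {n : ℕ} (hn : n ≠ 0) : (X ^ Fintype.card F ^ n - X : F[X]).Monic := by
  have h2 : 2 ≤ Fintype.card F ^ n :=
    le_trans Fintype.one_lt_card (Nat.le_self_pow hn _)
  apply (monic_X_pow _).sub_of_left
  rw [degree_X_pow, degree_X]
  exact_mod_cast lt_of_lt_of_le one_lt_two (by exact_mod_cast h2)

lemma fn_squarefree {n : ℕ} (hn : n ≠ 0) :
    Squarefree (X ^ Fintype.card F ^ n - X : F[X]) := by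
  apply Separable.squarefree
  rw [Polynomial.separable_def, derivative_sub, derivative_X_pow, derivative_X]
  have h0 : ((Fintype.card F ^ n : ℕ) : F) = 0 := by
    rw [Nat.cast_pow, FiniteField.cast_card_eq_zero, zero_pow hn]
  rw [h0, map_zero, zero_mul, zero_sub]
  exact ⟨0, -1, by ring⟩

/-- The finset of monic irreducible polynomials of degree `n` over `F`. -/
noncomputable def Md (n : ℕ) : Finset F[X] :=
  (normalizedFactors (X ^ Fintype.card F ^ n - X : F[X])).toFinset.filter
    fun P => P.natDegree = n

lemma mem_factors_iff {n : ℕ} (hn : n ≠ 0) {P : F[X]} :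
    P ∈ (normalizedFactors (X ^ Fintype.card F ^ n - X : F[X])).toFinset ↔
      P.Monic ∧ Irreducible P ∧ P ∣ (X ^ Fintype.card F ^ n - X : F[X]) := by
  have hf0 : (X ^ Fintype.card F ^ n - X : F[X]) ≠ 0 := (fn_monic F hn).ne_zero
  rw [Multiset.mem_toFinset]
  constructor
  · intro h
    refine ⟨?_, irreducible_of_normalized_factor _ h, dvd_of_mem_normalizedFactors h⟩
    rw [← normalize_normalized_factor _ h]
    exact monic_normalize ((irreducible_of_normalized_factor _ h).ne_zero)
  · rintro ⟨hmon, hirr, hdvd⟩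
    have hdvd' : P ∣ (normalizedFactors (X ^ Fintype.card F ^ n - X : F[X])).prod :=
      (Associated.dvd_iff_dvd_right (prod_normalizedFactors hf0)).mpr hdvd
    obtain ⟨Q, hQ, hPQ⟩ :=
      (UniqueFactorizationMonoid.irreducible_iff_prime.mp hirr).exists_mem_multiset_dvd hdvd'
    have hassoc := hirr.associated_of_dvd (irreducible_of_normalized_factor _ hQ) hPQ
    have hQmon : Q.Monic := by
      rw [← normalize_normalized_factor _ hQ]
      exact monic_normalize ((irreducible_of_normalized_factor _ hQ).ne_zero)
    rwa [eq_of_monic_of_associated hmon hQmon hassoc]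

lemma mem_Md_iff {n : ℕ} (hn : n ≠ 0) {P : F[X]} :
    P ∈ Md F n ↔ P.Monic ∧ Irreducible P ∧ P.natDegree = n := by
  rw [Md, Finset.mem_filter, mem_factors_iff F hn]
  constructor
  · rintro ⟨⟨hm, hi, -⟩, hd⟩; exact ⟨hm, hi, hd⟩
  · rintro ⟨hm, hi, hd⟩
    exact ⟨⟨hm, hi, (dvd_iff_natDegree_dvd F hm hi hn).mpr (hd ▸ dvd_rfl)⟩, hd⟩

lemma card_identity {n : ℕ} (hn : n ≠ 0) :
    Fintype.card F ^ n = ∑ d ∈ n.divisors, d * (Md F d).card := by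
  classical
  set f : F[X] := X ^ Fintype.card F ^ n - X with hf
  have hf0 : f ≠ 0 := (fn_monic F hn).ne_zero
  have hnodup : (normalizedFactors f).Nodup :=
    (squarefree_iff_nodup_normalizedFactors hf0).mp (fn_squarefree F hn)
  set S : Finset F[X] := (normalizedFactors f).toFinset with hS
  have hSval : S.val = normalizedFactors f := Multiset.dedup_eq_self.mpr hnodup
  have hprod : ∏ P ∈ S, P = f := by
    refine eq_of_monic_of_associated ?_ (fn_monic F hn) ?_
    · apply monic_prod_of_monic
      intro P hP
      exact ((mem_factors_iff F hn).mp hP).1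
    · rw [Finset.prod_eq_multiset_prod]
      simp only [Multiset.map_id', hSval]
      exact prod_normalizedFactors hf0
  have hdeg : Fintype.card F ^ n = ∑ P ∈ S, P.natDegree := by
    have := FiniteField.X_pow_card_pow_sub_X_natDegree_eq F hn (Fintype.one_lt_card (α := F))
    rw [← hf] at this
    rw [← this, ← hprod, natDegree_prod]
    intro P hP
    exact ((mem_factors_iff F hn).mp hP).2.1.ne_zero
  have hmaps : ∀ P ∈ S, P.natDegree ∈ n.divisors := by
    intro P hP
    obtain ⟨hm, hi, hdvd⟩ := (mem_factors_iff F hn).mp hP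
    exact Nat.mem_divisors.mpr ⟨(dvd_iff_natDegree_dvd F hm hi hn).mp hdvd, hn⟩
  rw [hdeg, ← Finset.sum_fiberwise_of_maps_to hmaps]
  refine Finset.sum_congr rfl fun d hd => ?_
  obtain ⟨hdvd, -⟩ := Nat.mem_divisors.mp hd
  have hd0 : d ≠ 0 := by
    rintro rfl
    exact hn (Nat.eq_zero_of_zero_dvd hdvd)
  have hfilter : S.filter (fun P => P.natDegree = d) = Md F d := by
    ext P
    rw [Finset.mem_filter, mem_factors_iff F hn, mem_Md_iff F hd0]
    constructor
    · rintro ⟨⟨hm, hi, -⟩, h⟩; exact ⟨hm, hi, h⟩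
    · rintro ⟨hm, hi, h⟩
      exact ⟨⟨hm, hi, (dvd_iff_natDegree_dvd F hm hi hn).mpr (h ▸ hdvd)⟩, h⟩
  rw [hfilter]
  rw [Finset.sum_congr rfl fun P hP => ((mem_Md_iff F hd0).mp hP).2.2]
  rw [Finset.sum_const, smul_eq_mul, mul_comm]

end PolyCount

section Bounds
variable {q : ℕ} {π : ℕ → ℕ}
variable (hq : 2 ≤ q)
variable (hid : ∀ n : ℕ, n ≠ 0 → q ^ n = ∑ d ∈ n.divisors, d * π d)
include hq hid

lemma upper_bound {n : ℕ} (hn : n ≠ 0) : n * π n ≤ q ^ n := by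
  rw [hid n hn]
  exact Finset.single_le_sum (f := fun d => d * π d)
    (fun d _ => Nat.zero_le _) (Nat.mem_divisors_self n hn)

lemma geom_le' (m : ℕ) : ∑ d ∈ Finset.range (m + 1), q ^ d ≤ 2 * q ^ m := by
  induction m with
  | zero => simpa using one_le_two
  | succ m ih =>
    rw [Finset.sum_range_succ]
    have h1 : 2 * q ^ m ≤ q ^ (m + 1) := by
      rw [pow_succ, mul_comm]
      exact Nat.mul_le_mul le_rfl hq
    calc ∑ d ∈ Finset.range (m + 1), q ^ d + q ^ (m + 1)
        ≤ 2 * q ^ m + q ^ (m + 1) := Nat.add_le_add_right ih _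
      _ ≤ q ^ (m + 1) + q ^ (m + 1) := Nat.add_le_add_right h1 _
      _ = 2 * q ^ (m + 1) := (two_mul _).symm

lemma lower_bound {n : ℕ} (hn : n ≠ 0) :
    q ^ n ≤ n * π n + 2 * q ^ (n / 2) := by
  have h1 : q ^ n = ∑ d ∈ n.divisors.erase n, d * π d + n * π n := by
    rw [hid n hn, Finset.sum_erase_add _ _ (Nat.mem_divisors_self n hn)]
  rw [h1, Nat.add_comm, Nat.add_le_add_iff_left]
  have hsub : n.divisors.erase n ⊆ Finset.Icc 1 (n / 2) := by
    intro d hd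
    obtain ⟨hne, hdvd⟩ := Finset.mem_erase.mp hd
    obtain ⟨hdvd, -⟩ := Nat.mem_divisors.mp hdvd
    obtain ⟨k, hk⟩ := hdvd
    have hd0 : d ≠ 0 := by
      rintro rfl; exact hn (by simpa using hk)
    have hk2 : 2 ≤ k := by
      rcases Nat.lt_or_ge k 2 with h | h
      · interval_cases k
        · exact absurd (by simpa using hk) hn
        · exact absurd (by simpa using hk.symm) hne
      · exact h
    refine Finset.mem_Icc.mpr ⟨Nat.one_le_iff_ne_zero.mpr hd0, ?_⟩
    rw [Nat.le_div_iff_mul_le two_pos, hk]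
    exact Nat.mul_le_mul_left d hk2
  calc ∑ d ∈ n.divisors.erase n, d * π d
      ≤ ∑ d ∈ n.divisors.erase n, q ^ d := by
        refine Finset.sum_le_sum fun d hd => ?_
        have hd0 : d ≠ 0 := Nat.one_le_iff_ne_zero.mp (Finset.mem_Icc.mp (hsub hd)).1
        exact upper_bound hq hid hd0
    _ ≤ ∑ d ∈ Finset.Icc 1 (n / 2), q ^ d := Finset.sum_le_sum_of_subset hsub
    _ ≤ ∑ d ∈ Finset.range (n / 2 + 1), q ^ d := by
        refine Finset.sum_le_sum_of_subset fun d hd => ?_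
        rw [Finset.mem_range]
        exact Nat.lt_succ_of_le (Finset.mem_Icc.mp hd).2
    _ ≤ 2 * q ^ (n / 2) := geom_le' hq hid _

/-- Real bound: `|π n / q^n - 1/n| ≤ 2 * t^n` with `t = (√2)⁻¹`. -/
lemma real_bound {n : ℕ} (hn : n ≠ 0) :
    |((π n : ℝ) / (q : ℝ) ^ n) - 1 / n| ≤ 2 * ((Real.sqrt 2)⁻¹) ^ n := by
  have hq2 : (2 : ℝ) ≤ (q : ℝ) := by exact_mod_cast hq
  have hq0 : (0 : ℝ) < (q : ℝ) := by linarith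
  have hqn : (0 : ℝ) < (q : ℝ) ^ n := by positivity
  have hqh : (0 : ℝ) < (q : ℝ) ^ (n / 2 : ℕ) := by positivity
  have hn1 : (1 : ℝ) ≤ (n : ℝ) := by exact_mod_cast Nat.pos_of_ne_zero hn
  have hn0 : (0 : ℝ) < (n : ℝ) := by linarith
  have hub : (n : ℝ) * (π n : ℝ) ≤ (q : ℝ) ^ n := by exact_mod_cast upper_bound hq hid hn
  have hlb : (q : ℝ) ^ n ≤ (n : ℝ) * (π n : ℝ) + 2 * (q : ℝ) ^ (n / 2 : ℕ) := by
    exact_mod_cast lower_bound hq hid hn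
  have hx_nonpos : (π n : ℝ) / (q : ℝ) ^ n - 1 / n ≤ 0 := by
    rw [sub_nonpos, div_le_div_iff₀ hqn hn0]
    linarith [hub]
  have key : |((π n : ℝ) / (q : ℝ) ^ n) - 1 / n| ≤ 2 * (q : ℝ) ^ (n / 2 : ℕ) / (q : ℝ) ^ n := by
    rw [abs_of_nonpos hx_nonpos, neg_sub]
    have e : 1 / (n : ℝ) - (π n : ℝ) / (q : ℝ) ^ n
        = ((q : ℝ) ^ n - (n : ℝ) * (π n : ℝ)) / ((n : ℝ) * (q : ℝ) ^ n) := by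
      field_simp
    rw [e]
    calc ((q : ℝ) ^ n - (n : ℝ) * (π n : ℝ)) / ((n : ℝ) * (q : ℝ) ^ n)
        ≤ (2 * (q : ℝ) ^ (n / 2 : ℕ)) / ((n : ℝ) * (q : ℝ) ^ n) := by
          gcongr
          linarith

      _ ≤ (2 * (q : ℝ) ^ (n / 2 : ℕ)) / (1 * (q : ℝ) ^ n) := by
          gcongr
      _ = 2 * (q : ℝ) ^ (n / 2 : ℕ) / (q : ℝ) ^ n := by rw [one_mul]
  refine key.trans ?_
  have hsplit : (q : ℝ) ^ n = (q : ℝ) ^ (n / 2 : ℕ) * (q : ℝ) ^ (n - n / 2 : ℕ) := by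
    rw [← pow_add]; congr 1; omega
  have hs2 : (Real.sqrt 2) ^ n ≤ (q : ℝ) ^ (n - n / 2 : ℕ) := by
    have hsq1 : (1 : ℝ) ≤ Real.sqrt 2 := Real.one_le_sqrt.mpr one_le_two
    have h1 : (Real.sqrt 2) ^ n ≤ (Real.sqrt 2) ^ (2 * (n - n / 2)) := by
      apply pow_le_pow_right₀ hsq1
      omega
    have h2 : (Real.sqrt 2) ^ (2 * (n - n / 2)) = 2 ^ (n - n / 2 : ℕ) := by
      rw [pow_mul, Real.sq_sqrt (by norm_num : (0:ℝ) ≤ 2)]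
    have h3 : (2 : ℝ) ^ (n - n / 2 : ℕ) ≤ (q : ℝ) ^ (n - n / 2 : ℕ) :=
      pow_le_pow_left₀ (by norm_num) hq2 _
    calc (Real.sqrt 2) ^ n ≤ 2 ^ (n - n / 2 : ℕ) := h1.trans_eq h2
      _ ≤ (q : ℝ) ^ (n - n / 2 : ℕ) := h3
  have hsqrt_pos : (0 : ℝ) < (Real.sqrt 2) ^ n := by positivity
  have e2 : 2 * (q : ℝ) ^ (n / 2 : ℕ) / (q : ℝ) ^ n = 2 / (q : ℝ) ^ (n - n / 2 : ℕ) := by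
    rw [hsplit]
    field_simp
  rw [e2]
  calc (2 : ℝ) / (q : ℝ) ^ (n - n / 2 : ℕ) ≤ 2 / (Real.sqrt 2) ^ n := by
        gcongr
    _ = 2 * ((Real.sqrt 2)⁻¹) ^ n := by rw [inv_pow, div_eq_mul_inv]

end Bounds

section Analytic
open Real

lemma analytic_main (A : ℕ → ℝ)
    (hA : ∀ n : ℕ, n ≠ 0 → |A n - 1 / n| ≤ 2 * ((Real.sqrt 2)⁻¹) ^ n) :
    ∃ c C : ℝ, ∀ X : ℕ, 1 ≤ X →
      |(∑ n ∈ Finset.Icc 1 X, A n) - Real.log X - c| ≤ C / X := by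
  have hsqrt2 : (1 : ℝ) < Real.sqrt 2 := by
    rw [show (1:ℝ) = Real.sqrt 1 from (Real.sqrt_one).symm]
    exact Real.sqrt_lt_sqrt (by norm_num) (by norm_num)
  set t : ℝ := (Real.sqrt 2)⁻¹ with ht
  have ht0 : 0 < t := by positivity
  have ht1 : t < 1 := by
    rw [ht, inv_lt_one_iff₀]; right; exact hsqrt2
  set g : ℕ → ℝ := fun n => if n = 0 then 0 else A n - 1 / n with hgdef
  have hg : ∀ n : ℕ, |g n| ≤ 2 * t ^ n := by
    intro n
    by_cases h : n = 0
    · simp [hgdef, h]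
    · simpa [hgdef, h] using hA n h
  have hgeo : Summable fun n : ℕ => 2 * t ^ n :=
    (summable_geometric_of_lt_one ht0.le ht1).mul_left 2
  have hsum : Summable g :=
    Summable.of_norm_bounded hgeo (fun n => by simpa using hg n)
  refine ⟨Real.eulerMascheroniConstant + ∑' n, g n,
    1 + 2 * t ^ 2 / (1 - t) ^ 2, ?_⟩
  intro X hX
  have hX0 : (0 : ℝ) < (X : ℝ) := by exact_mod_cast hX
  -- Step 1: rewrite the finite sum
  have step1 : ∑ n ∈ Finset.Icc 1 X, A n
      = (harmonic X : ℝ) + ∑ n ∈ Finset.range (X + 1), g n := by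
    have h1 : ∑ n ∈ Finset.Icc 1 X, A n
        = ∑ n ∈ Finset.Icc 1 X, ((n : ℝ)⁻¹ + g n) := by
      refine Finset.sum_congr rfl fun n hn => ?_
      have hn0 : n ≠ 0 := by
        have := (Finset.mem_Icc.mp hn).1; omega
      simp [hgdef, hn0, one_div]
    have h2 : (harmonic X : ℝ) = ∑ n ∈ Finset.Icc 1 X, (n : ℝ)⁻¹ := by
      rw [harmonic_eq_sum_Icc]
      push_cast
      rfl
    have h3 : ∑ n ∈ Finset.range (X + 1), g n = ∑ n ∈ Finset.Icc 1 X, g n := by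
      have hr : Finset.range (X + 1) = Finset.Icc 0 X := by
        rw [← Nat.Ico_zero_eq_range, Finset.Ico_add_one_right_eq_Icc]
      rw [hr, Finset.Icc_eq_cons_Ioc (Nat.zero_le X), Finset.sum_cons]
      have : Finset.Ioc 0 X = Finset.Icc 1 X := by
        rw [← Finset.Icc_add_one_left_eq_Ioc, zero_add]
      rw [this]
      simp [hgdef]
    rw [h1, Finset.sum_add_distrib, h2, h3]
  -- Step 2: tsum split
  have step2 : ∑ n ∈ Finset.range (X + 1), g n
      = (∑' n, g n) - ∑' n, g (n + (X + 1)) := by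
    have := Summable.sum_add_tsum_nat_add (f := g) (X + 1) hsum
    linarith
  -- Tail bound
  have hshift : Summable fun n => g (n + (X + 1)) :=
    (summable_nat_add_iff (X + 1)).mpr hsum
  have hshiftnorm : Summable fun n => ‖g (n + (X + 1))‖ :=
    Summable.of_norm_bounded ((summable_geometric_of_lt_one ht0.le ht1).mul_left
      (2 * t ^ (X + 1))) (fun n => by
        rw [norm_norm, Real.norm_eq_abs]
        calc |g (n + (X + 1))| ≤ 2 * t ^ (n + (X + 1)) := hg _
          _ = 2 * t ^ (X + 1) * t ^ n := by rw [pow_add]; ring)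
  have tail_bound : |∑' n, g (n + (X + 1))| ≤ 2 * t ^ (X + 1) * (1 - t)⁻¹ := by
    calc |∑' n, g (n + (X + 1))| ≤ ∑' n, ‖g (n + (X + 1))‖ :=
          norm_tsum_le_tsum_norm hshiftnorm
      _ ≤ ∑' n : ℕ, (2 * t ^ (X + 1)) * t ^ n := by
          refine Summable.tsum_le_tsum (fun n => ?_) hshiftnorm
            ((summable_geometric_of_lt_one ht0.le ht1).mul_left _)
          rw [Real.norm_eq_abs]
          calc |g (n + (X + 1))| ≤ 2 * t ^ (n + (X + 1)) := hg _
            _ = 2 * t ^ (X + 1) * t ^ n := by rw [pow_add]; ring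
      _ = 2 * t ^ (X + 1) * (1 - t)⁻¹ := by
          rw [tsum_mul_left, tsum_geometric_of_lt_one ht0.le ht1]
  -- Bernoulli: (X : ℝ) * t ^ X ≤ t / (1 - t)
  have hXtX : (X : ℝ) * t ^ X ≤ t / (1 - t) := by
    have h1 : (X : ℝ) * ((1 - t) / t) ≤ (1 / t) ^ X := by
      have hinv : (0:ℝ) < 1 / t := by positivity
      have := one_add_mul_le_pow (a := 1 / t - 1) (by linarith) X
      have he : (1 : ℝ) + (1 / t - 1) = 1 / t := by ring
      rw [he] at this
      have : (X : ℝ) * (1 / t - 1) ≤ (1 / t) ^ X := by linarith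
      calc (X : ℝ) * ((1 - t) / t) = (X : ℝ) * (1 / t - 1) := by
            field_simp
        _ ≤ (1 / t) ^ X := this
    have h2 : (X : ℝ) * ((1 - t) / t) * t ^ X ≤ (1 / t) ^ X * t ^ X :=
      mul_le_mul_of_nonneg_right h1 (by positivity)
    have h3 : (1 / t) ^ X * t ^ X = 1 := by
      rw [← mul_pow, one_div, inv_mul_cancel₀ ht0.ne', one_pow]
    rw [h3] at h2
    have h1t : (0:ℝ) < 1 - t := by linarith
    have h4 : (0:ℝ) < t / (1 - t) := by positivity
    have h5 := mul_le_mul_of_nonneg_right h2 h4.le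
    have he2 : (X:ℝ) * ((1 - t) / t) * t ^ X * (t / (1 - t)) = (X:ℝ) * t ^ X := by
      field_simp
    rw [he2, one_mul] at h5
    exact h5
  have h1t : (0:ℝ) < 1 - t := by linarith
  -- gamma bounds
  have hgl := Real.eulerMascheroniSeq_lt_eulerMascheroniConstant X
  have hgu := Real.eulerMascheroniConstant_lt_eulerMascheroniSeq' X
  rw [Real.eulerMascheroniSeq] at hgl
  rw [Real.eulerMascheroniSeq', if_neg (by omega : X ≠ 0)] at hgu
  have hlog : Real.log ((X:ℝ) + 1) - Real.log X ≤ 1 / X := by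
    rw [← Real.log_div (by positivity) hX0.ne']
    calc Real.log (((X:ℝ) + 1) / X) ≤ ((X:ℝ) + 1) / X - 1 :=
          Real.log_le_sub_one_of_pos (by positivity)
      _ = 1 / X := by field_simp; ring
  have habs1 : |(harmonic X : ℝ) - Real.log X - Real.eulerMascheroniConstant| ≤ 1 / X := by
    rw [abs_le]
    have hx1 : (0:ℝ) ≤ 1 / X := by positivity
    constructor <;> linarith
  -- tail quantitative bound
  have htail2 : 2 * t ^ (X + 1) * (1 - t)⁻¹ ≤ 2 * t ^ 2 / (1 - t) ^ 2 / X := by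
    have h6 : t ^ X ≤ t / (1 - t) / X := by
      rw [le_div_iff₀ hX0]
      linarith [hXtX]
    calc 2 * t ^ (X + 1) * (1 - t)⁻¹ = (2 * t * (1 - t)⁻¹) * t ^ X := by
          rw [pow_succ]; ring
      _ ≤ (2 * t * (1 - t)⁻¹) * (t / (1 - t) / X) := by
          gcongr
      _ = 2 * t ^ 2 / (1 - t) ^ 2 / X := by
          field_simp
  -- assemble
  rw [step1, step2]
  have heq : (harmonic X : ℝ) + ((∑' n, g n) - ∑' n, g (n + (X + 1))) - Real.log X -
      (Real.eulerMascheroniConstant + ∑' n, g n)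
      = ((harmonic X : ℝ) - Real.log X - Real.eulerMascheroniConstant)
        - ∑' n, g (n + (X + 1)) := by ring
  rw [heq, add_div]
  calc |((harmonic X : ℝ) - Real.log X - Real.eulerMascheroniConstant)
        - ∑' n, g (n + (X + 1))|
      ≤ |(harmonic X : ℝ) - Real.log X - Real.eulerMascheroniConstant|
        + |∑' n, g (n + (X + 1))| := abs_sub _ _
    _ ≤ 1 / X + 2 * t ^ 2 / (1 - t) ^ 2 / X := by
        refine add_le_add habs1 (tail_bound.trans htail2)
    _ = 1 / X + 2 * t ^ 2 / (1 - t) ^ 2 / X := rfl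

end Analytic

section Assemble

variable (F : Type) [Field F] [Fintype F]

lemma finsum_eval (Y : ℕ) (hY : 1 ≤ Y) :
    ∑ᶠ P ∈ {P : F[X] | P.Monic ∧ Irreducible P ∧ P.natDegree ≤ Y},
      1 / (Fintype.card F : ℝ) ^ P.natDegree
    = ∑ n ∈ Finset.Icc 1 Y, ((Md F n).card : ℝ) / (Fintype.card F : ℝ) ^ n := by
  classical
  set T : Finset F[X] := (Finset.Icc 1 Y).biUnion (Md F) with hT
  have hmem : ∀ n ∈ Finset.Icc 1 Y, ∀ P ∈ Md F n,
      P.Monic ∧ Irreducible P ∧ P.natDegree = n := by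
    intro n hn P hP
    have hn0 : n ≠ 0 := by have := (Finset.mem_Icc.mp hn).1; omega
    exact (mem_Md_iff F hn0).mp hP
  have hset : {P : F[X] | P.Monic ∧ Irreducible P ∧ P.natDegree ≤ Y} = ↑T := by
    ext P
    simp only [Set.mem_setOf_eq, hT, Finset.coe_biUnion, Set.mem_iUnion,
      Finset.mem_coe, Finset.mem_Icc]
    constructor
    · rintro ⟨hm, hi, hd⟩
      refine ⟨P.natDegree, ⟨hi.natDegree_pos, hd⟩, ?_⟩
      exact (mem_Md_iff F hi.natDegree_pos.ne').mpr ⟨hm, hi, rfl⟩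
    · rintro ⟨n, ⟨h1, h2⟩, hP⟩
      obtain ⟨hm, hi, hd⟩ := hmem n (Finset.mem_Icc.mpr ⟨h1, h2⟩) P hP
      exact ⟨hm, hi, hd ▸ h2⟩
  rw [hset, finsum_mem_coe_finset, hT, Finset.sum_biUnion]
  · refine Finset.sum_congr rfl fun n hn => ?_
    have h1 : ∀ P ∈ Md F n, (1 : ℝ) / (Fintype.card F : ℝ) ^ P.natDegree
        = 1 / (Fintype.card F : ℝ) ^ n := by
      intro P hP
      rw [(hmem n hn P hP).2.2]
    rw [Finset.sum_congr rfl h1, Finset.sum_const, nsmul_eq_mul]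
    rw [mul_one_div]
  · intro a ha b hb hab
    apply Finset.disjoint_left.mpr
    intro P hPa hPb
    exact hab ((hmem a ha P hPa).2.2 ▸ (hmem b hb P hPb).2.2)

end Assemble

/-- There is a constant `c` with
`Σ_{deg P ≤ X} 1/|P| = log X + c + O(1/X)`, the sum being over monic
irreducible polynomials `P` of degree at most `X` in `𝔽_q[x]`. -/
theorem sum_inv_normP (F : Type) [Field F] [Fintype F] :
    ∃ c C : ℝ, ∀ X : ℕ, 1 ≤ X →
      |(∑ᶠ P ∈ {P : F[X] | P.Monic ∧ Irreducible P ∧ P.natDegree ≤ X},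
          1 / (Fintype.card F : ℝ) ^ P.natDegree) - Real.log X - c| ≤ C / X := by
  have hq : 2 ≤ Fintype.card F := Fintype.one_lt_card
  have hid : ∀ n : ℕ, n ≠ 0 →
      Fintype.card F ^ n = ∑ d ∈ n.divisors, d * (fun m => (Md F m).card) d :=
    fun n hn => card_identity F hn
  set A : ℕ → ℝ := fun n => ((Md F n).card : ℝ) / (Fintype.card F : ℝ) ^ n with hA
  have hbound : ∀ n : ℕ, n ≠ 0 → |A n - 1 / n| ≤ 2 * ((Real.sqrt 2)⁻¹) ^ n :=
    fun n hn => real_bound hq hid hn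
  obtain ⟨c, C, hc⟩ := analytic_main A hbound
  refine ⟨c, C, fun X hX => ?_⟩
  rw [finsum_eval F X hX]
  exact hc X hX
end
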